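/- arXiv:2404.00222 — 2 statements merged into one kernel-verified Lean document; each statement's English description precedes it below -/
import Mathlib

section
/- Let q = 2^k for a positive integer k, and let f : F_q → F_q. Then f preserves positivity on M_3(F_q) if and only if there exist c ∈ F_q with c ≠ 0 and an integer ℓ with 0 ≤ ℓ ≤ k−1 such that f(x) = c·x^{2^ℓ} for all x ∈ F_q, i.e., f is a nonzero multiple of a field automorphism of F_q. -/
/-- An element of a field is *positive* if it is a nonzero square. -/
def IsPos {F : Type*} [Field F] (x : F) : Prop := ∃ y : F, y ≠ 0 ∧ y ^ 2 = x

/-- The `r`-th leading principal minor of a square matrix (the determinant of the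
top-left `(r+1) × (r+1)` submatrix). -/
def leadingMinor {F : Type*} [CommRing F] {n : ℕ} (A : Matrix (Fin n) (Fin n) F)
    (r : Fin n) : F :=
  (A.submatrix (Fin.castLE r.isLt) (Fin.castLE r.isLt)).det

/-- A matrix over a finite field is positive definite if it is symmetric and all its
leading principal minors are positive (nonzero squares). -/
def IsPosDef {F : Type*} [Field F] {n : ℕ} (A : Matrix (Fin n) (Fin n) F) : Prop :=
  A.IsSymm ∧ ∀ r : Fin n, IsPos (leadingMinor A r)

/-- The entrywise application `f[A]` of `f` to the matrix `A`. -/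
def entrywiseMap {F : Type*} {n : ℕ} (f : F → F) (A : Matrix (Fin n) (Fin n) F) :
    Matrix (Fin n) (Fin n) F := Matrix.of fun i j => f (A i j)

/-- `f` preserves positivity on `n × n` matrices. -/
def PreservesPos {F : Type*} [Field F] (n : ℕ) (f : F → F) : Prop :=
  ∀ A : Matrix (Fin n) (Fin n) F, IsPosDef A → IsPosDef (entrywiseMap f A)

/-!
In characteristic two every element of a finite field is a square, so a symmetric matrix is
positive definite exactly when its leading principal minors are nonzero. Testing `f` on the
symmetric matrices `diag(a, 1, 1)` and `[[a, b, 0], [b, c, 0], [0, 0, 1]]` shows `f a ≠ 0` for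
`a ≠ 0` and that `a c ≠ b²` forces `f a * f c ≠ (f b)²`. Hence `f` is injective, so bijective,
and then `a c = b²` forces `f a * f c = (f b)²`, which makes `f / f 1` multiplicative. The matrix
`[[1, u, v], [u, 1, 0], [v, 0, 1]]` has determinant `(1 + u + v)²`; choosing `v` with
`f v = f u + f 1` yields `f (u + 1) = f u + f 1`, and with multiplicativity this gives
additivity. So `f / f 1` is a ring endomorphism of `F`, i.e. a power of the Frobenius.
Conversely, `x ↦ c * σ x` multiplies the `r`-th leading minor by `c ^ (r + 1)` after applying `σ`.
-/

theorem FiniteField.exists_lt_ringHom_eq_pow_char_pow {F : Type*} [Field F] [Fintype F]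
    {p k : ℕ} [Fact p.Prime] [CharP F p] (hcard : Fintype.card F = p ^ k) (σ : F →+* F) :
    ∃ ℓ < k, ∀ x, σ x = x ^ p ^ ℓ := by
  let _ := ZMod.algebra F p
  let σ' : F →ₐ[ZMod p] F :=
    { σ with
      commutes' := DFunLike.congr_fun (Subsingleton.elim (σ.comp (algebraMap (ZMod p) F)) _) }
  obtain ⟨ℓ, hℓ⟩ := (bijective_frobeniusAlgHom_pow (ZMod p) F).2 σ'
  have hrank : Module.finrank (ZMod p) F = k := by
    have := Module.card_eq_pow_finrank (K := ZMod p) (V := F)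
    rw [ZMod.card, hcard] at this
    exact (Nat.pow_right_injective (Fact.out : p.Prime).two_le this).symm
  refine ⟨ℓ, hrank ▸ ℓ.2, fun x => ?_⟩
  have := congrArg (· x) hℓ
  simp only [AlgHom.coe_pow, coe_frobeniusAlgHom, pow_iterate, ZMod.card] at this
  exact this.symm

theorem entrywiseMap_three {F : Type*} (f : F → F) (a b c d e g h i j : F) :
    entrywiseMap f !![a, b, c; d, e, g; h, i, j] =
      !![f a, f b, f c; f d, f e, f g; f h, f i, f j] := by
  ext i j; fin_cases i <;> fin_cases j <;> rfl

section CharTwo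

variable {F : Type*} [Field F] [Finite F] [CharP F 2]

theorem isPos_iff_ne_zero (x : F) : IsPos x ↔ x ≠ 0 := by
  refine ⟨fun ⟨y, hy, hyx⟩ => hyx ▸ pow_ne_zero 2 hy, fun hx => ?_⟩
  obtain ⟨y, rfl⟩ := isSquare_of_charTwo' x
  exact ⟨y, left_ne_zero_of_mul hx, sq y⟩

theorem isPosDef_iff_ne_zero {n : ℕ} (A : Matrix (Fin n) (Fin n) F) :
    IsPosDef A ↔ A.IsSymm ∧ ∀ r, leadingMinor A r ≠ 0 := by
  simp only [IsPosDef, isPos_iff_ne_zero]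

theorem isPosDef_three_iff (p u v q w r : F) :
    IsPosDef !![p, u, v; u, q, w; v, w, r] ↔
      p ≠ 0 ∧ p * q ≠ u ^ 2 ∧ p * q * r + p * w ^ 2 + q * v ^ 2 + r * u ^ 2 ≠ 0 := by
  have h2 : (2 : F) = 0 := CharTwo.two_eq_zero
  have hsymm : (!![p, u, v; u, q, w; v, w, r]).IsSymm := by
    ext i j; fin_cases i <;> fin_cases j <;> rfl
  have hdet : p * q * r - p * w * w - u * u * r + u * w * v + v * u * w - v * q * v
      = p * q * r + p * w ^ 2 + q * v ^ 2 + r * u ^ 2 := by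
    linear_combination (u * v * w - p * w ^ 2 - q * v ^ 2 - r * u ^ 2) * h2
  simp [isPosDef_iff_ne_zero, hsymm, Fin.forall_fin_succ, leadingMinor, Matrix.det_fin_two,
    Matrix.det_fin_three, Fin.castLE, hdet, sub_eq_zero, sq]

namespace PreservesPos

variable {f : F → F}

theorem minors_ne_zero_three (hf : PreservesPos 3 f) {p u v q w r : F}
    (h : p ≠ 0 ∧ p * q ≠ u ^ 2 ∧ p * q * r + p * w ^ 2 + q * v ^ 2 + r * u ^ 2 ≠ 0) :
    f p ≠ 0 ∧ f p * f q ≠ f u ^ 2 ∧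
      f p * f q * f r + f p * f w ^ 2 + f q * f v ^ 2 + f r * f u ^ 2 ≠ 0 := by
  have := hf _ ((isPosDef_three_iff p u v q w r).2 h)
  rwa [entrywiseMap_three, isPosDef_three_iff] at this

theorem map_ne_zero (hf : PreservesPos 3 f) {a : F} (ha : a ≠ 0) : f a ≠ 0 :=
  (hf.minors_ne_zero_three (u := 0) (v := 0) (q := 1) (w := 0) (r := 1) (by simpa using ha)).1

theorem map_mul_map_ne_sq (hf : PreservesPos 3 f) {a b c : F} (ha : a ≠ 0)
    (h : a * c ≠ b ^ 2) : f a * f c ≠ f b ^ 2 :=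
  (hf.minors_ne_zero_three (v := 0) (w := 0) (r := 1)
    ⟨ha, h, by simpa [CharTwo.add_eq_zero]⟩).2.1

theorem injective (hf : PreservesPos 3 f) : Function.Injective f := by
  intro a b hab
  by_contra hne
  rcases eq_or_ne a 0 with rfl | ha
  · exact hf.map_mul_map_ne_sq (b := 0) (c := b) (Ne.symm hne) (by simpa using Ne.symm hne)
      (by rw [← hab]; ring)
  · exact hf.map_mul_map_ne_sq (b := b) ha (by rwa [← sq, Ne, CharTwo.sq_inj]) (by rw [hab]; ring)

theorem surjective (hf : PreservesPos 3 f) : Function.Surjective f :=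
  Finite.surjective_of_injective hf.injective

theorem map_zero (hf : PreservesPos 3 f) : f 0 = 0 := by
  obtain ⟨x, hx⟩ := hf.surjective 0
  rcases eq_or_ne x 0 with rfl | hx0
  · exact hx
  · exact absurd hx (hf.map_ne_zero hx0)

theorem map_mul_map_eq_sq (hf : PreservesPos 3 f) {a b c : F} (ha : a ≠ 0)
    (h : a * c = b ^ 2) : f a * f c = f b ^ 2 := by
  obtain ⟨b', hb'⟩ :=
    (Finite.surjective_of_injective CharTwo.sq_injective).comp hf.surjective (f a * f c)
  have hac : a * c = b' ^ 2 := by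
    by_contra hne
    exact hf.map_mul_map_ne_sq ha hne hb'.symm
  rw [CharTwo.sq_inj.1 (h.symm.trans hac)]
  exact hb'.symm

theorem map_mul_mul_map_one (hf : PreservesPos 3 f) (u v : F) :
    f (u * v) * f 1 = f u * f v := by
  rcases eq_or_ne u 0 with rfl | hu
  · simp [hf.map_zero]
  rcases eq_or_ne v 0 with rfl | hv
  · simp [hf.map_zero]
  have hsq (x : F) (hx : x ≠ 0) : f (x ^ 2) * f 1 = f x ^ 2 :=
    hf.map_mul_map_eq_sq (pow_ne_zero 2 hx) (mul_one _)
  have huv : f (u ^ 2) * f (v ^ 2) = f (u * v) ^ 2 :=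
    hf.map_mul_map_eq_sq (pow_ne_zero 2 hu) (mul_pow u v 2).symm
  apply CharTwo.sq_injective
  calc (f (u * v) * f 1) ^ 2 = f (u ^ 2) * f 1 * (f (v ^ 2) * f 1) := by
        rw [mul_pow, ← huv]; ring
    _ = (f u * f v) ^ 2 := by rw [hsq u hu, hsq v hv]; ring

theorem map_one_add_map_add_map_ne_zero (hf : PreservesPos 3 f) {u v : F} (hu : u ≠ 1)
    (h : 1 + u + v ≠ 0) : f 1 + f u + f v ≠ 0 := by
  have h2 : (2 : F) = 0 := CharTwo.two_eq_zero
  have hminor : (1 : F) * 1 ≠ u ^ 2 := by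
    rw [mul_one, ← one_pow 2, Ne, CharTwo.sq_inj]; exact hu.symm
  have hdet : (1 : F) * 1 * 1 + 1 * 0 ^ 2 + 1 * v ^ 2 + 1 * u ^ 2 ≠ 0 := by
    have : (1 : F) * 1 * 1 + 1 * 0 ^ 2 + 1 * v ^ 2 + 1 * u ^ 2 = (1 + u + v) ^ 2 := by
      linear_combination (-(u + v + u * v)) * h2
    rw [this]; exact pow_ne_zero 2 h
  have key := (hf.minors_ne_zero_three ⟨one_ne_zero, hminor, hdet⟩).2.2
  rw [hf.map_zero] at key
  intro h0
  apply key
  linear_combination f 1 * (f 1 + f u + f v) * h0 - f 1 * (f 1 * f u + f 1 * f v + f u * f v) * h2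

theorem map_add_one (hf : PreservesPos 3 f) (u : F) : f (u + 1) = f u + f 1 := by
  rcases eq_or_ne u 1 with rfl | hu
  · rw [CharTwo.add_self_eq_zero, hf.map_zero, CharTwo.add_self_eq_zero]
  obtain ⟨v, hv⟩ := hf.surjective (f u + f 1)
  have huv : 1 + u + v = 0 := by
    by_contra h
    exact hf.map_one_add_map_add_map_ne_zero hu h (by rw [hv, add_comm (f u), CharTwo.add_eq_zero])
  rw [← hv, ← CharTwo.add_eq_zero.1 huv, add_comm]

theorem map_add (hf : PreservesPos 3 f) (x y : F) : f (x + y) = f x + f y := by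
  rcases eq_or_ne x 0 with rfl | hx
  · simp [hf.map_zero]
  apply mul_right_cancel₀ (hf.map_ne_zero one_ne_zero)
  calc f (x + y) * f 1 = f (x * (y / x + 1)) * f 1 := by
        rw [mul_add, mul_div_cancel₀ _ hx, mul_one, add_comm]
    _ = f x * f (y / x) + f x * f 1 := by rw [hf.map_mul_mul_map_one, hf.map_add_one, mul_add]
    _ = (f x + f y) * f 1 := by rw [← hf.map_mul_mul_map_one, mul_div_cancel₀ _ hx]; ring

def toRingHom (hf : PreservesPos 3 f) : F →+* F where
  toFun x := f x / f 1
  map_one' := div_self (hf.map_ne_zero one_ne_zero)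
  map_mul' x y := by
    rw [div_mul_div_comm, ← hf.map_mul_mul_map_one,
      mul_div_mul_right _ _ (hf.map_ne_zero one_ne_zero)]
  map_zero' := by simp [hf.map_zero]
  map_add' x y := by simp only [hf.map_add, add_div]

theorem eq_map_one_mul_toRingHom (hf : PreservesPos 3 f) (x : F) : f x = f 1 * hf.toRingHom x :=
  (mul_div_cancel₀ _ (hf.map_ne_zero one_ne_zero)).symm

end PreservesPos

end CharTwo

theorem Matrix.IsSymm.entrywiseMap {F : Type*} {n : ℕ} {A : Matrix (Fin n) (Fin n) F}
    (hA : A.IsSymm) (f : F → F) : (entrywiseMap f A).IsSymm := by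
  ext i j; simp [_root_.entrywiseMap, hA.apply i j]

theorem leadingMinor_entrywiseMap_const_mul_ringHom {R : Type*} [CommRing R] {n : ℕ} (c : R)
    (σ : R →+* R) (A : Matrix (Fin n) (Fin n) R) (r : Fin n) :
    leadingMinor (entrywiseMap (fun x => c * σ x) A) r =
      c ^ (r.val + 1) * σ (leadingMinor A r) := by
  have : (entrywiseMap (fun x => c * σ x) A).submatrix (Fin.castLE r.isLt) (Fin.castLE r.isLt) =
      c • (A.submatrix (Fin.castLE r.isLt) (Fin.castLE r.isLt)).map σ := by
    ext; rfl
  rw [leadingMinor, this, Matrix.det_smul, Fintype.card_fin, leadingMinor, RingHom.map_det]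
  rfl

theorem preservesPos_const_mul_ringHom {F : Type*} [Field F] [Finite F] [CharP F 2] {c : F}
    (hc : c ≠ 0) (σ : F →+* F) (n : ℕ) : PreservesPos n (fun x => c * σ x) := by
  intro A hA
  rw [isPosDef_iff_ne_zero] at hA ⊢
  refine ⟨hA.1.entrywiseMap _, fun r => ?_⟩
  rw [leadingMinor_entrywiseMap_const_mul_ringHom]
  exact mul_ne_zero (pow_ne_zero _ hc) ((map_ne_zero σ).2 (hA.2 r))

theorem stmt1_general {F : Type*} [Field F] [Fintype F] (k : ℕ)
    (hcard : Fintype.card F = 2 ^ k) (f : F → F) :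
    PreservesPos 3 f ↔
      ∃ (c : F) (ℓ : ℕ), c ≠ 0 ∧ ℓ ≤ k - 1 ∧ ∀ x : F, f x = c * x ^ 2 ^ ℓ := by
  have : CharP F 2 := charP_of_card_eq_prime_pow hcard
  constructor
  · intro hf
    obtain ⟨ℓ, hℓ, hσ⟩ := FiniteField.exists_lt_ringHom_eq_pow_char_pow hcard hf.toRingHom
    refine ⟨f 1, ℓ, hf.map_ne_zero one_ne_zero, by omega, fun x => ?_⟩
    rw [hf.eq_map_one_mul_toRingHom x, hσ]
  · rintro ⟨c, ℓ, hc, -, hfc⟩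
    have hfσ : f = fun x => c * iterateFrobenius F 2 ℓ x :=
      funext fun x => by rw [hfc, iterateFrobenius_def]
    exact hfσ ▸ preservesPos_const_mul_ringHom hc _ 3

/-- over `F = 𝔽_{2^k}`, `f` preserves positivity on `M_3(F)` iff `f` is a
nonzero multiple of a field automorphism, i.e. `f x = c x^{2^ℓ}` for some `c ≠ 0`
and `0 ≤ ℓ ≤ k − 1`. -/
theorem stmt1 {F : Type*} [Field F] [Fintype F] (k : ℕ) (hk : 1 ≤ k)
    (hcard : Fintype.card F = 2 ^ k) (f : F → F) :
    PreservesPos 3 f ↔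
      ∃ (c : F) (ℓ : ℕ), c ≠ 0 ∧ ℓ ≤ k - 1 ∧ ∀ x : F, f x = c * x ^ 2 ^ ℓ :=
  stmt1_general k hcard f
end

section
/- Let q be a prime power with q ≡ 1 (mod 4) and let f : F_q → F_q be a positivity preserver on M_3(F_q). Then f is injective on F_q^+, i.e., for all a, b ∈ F_q^+ with a ≠ b one has f(a) ≠ f(b). -/
theorem isSquare_neg_iff {R : Type*} [CommRing R] (h : IsSquare (-1 : R)) {x : R} :
    IsSquare (-x) ↔ IsSquare x :=
  ⟨fun hx => by simpa using h.mul hx, fun hx => by rw [neg_eq_neg_one_mul]; exact h.mul hx⟩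

section Positive

variable {F : Type*} [Field F] {x y : F}

theorem isPos_iff : IsPos x ↔ IsSquare x ∧ x ≠ 0 := by
  constructor
  · rintro ⟨y, hy, rfl⟩
    exact ⟨⟨y, sq y⟩, pow_ne_zero 2 hy⟩
  · rintro ⟨⟨y, rfl⟩, hx⟩
    exact ⟨y, left_ne_zero_of_mul hx, sq y⟩

theorem IsPos.ne_zero (hx : IsPos x) : x ≠ 0 := (isPos_iff.1 hx).2

theorem IsPos.mul (hx : IsPos x) (hy : IsPos y) : IsPos (x * y) := by
  obtain ⟨u, hu, rfl⟩ := hx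
  obtain ⟨v, hv, rfl⟩ := hy
  exact ⟨u * v, mul_ne_zero hu hv, by ring⟩

theorem IsPos.neg (h : IsSquare (-1 : F)) (hx : IsPos x) : IsPos (-x) :=
  isPos_iff.2 ⟨(isSquare_neg_iff h).2 (isPos_iff.1 hx).1, neg_ne_zero.2 hx.ne_zero⟩

theorem IsPos.div (hx : IsPos x) (hy : IsPos y) : IsPos (x / y) := by
  obtain ⟨u, hu, rfl⟩ := hx
  obtain ⟨v, hv, rfl⟩ := hy
  exact ⟨u / v, div_ne_zero hu hv, div_pow u v 2⟩

theorem isPos_sq (hx : x ≠ 0) : IsPos (x ^ 2) := ⟨x, hx, rfl⟩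

theorem isPos_one : IsPos (1 : F) := by simpa using isPos_sq (one_ne_zero (α := F))

theorem not_isPos_zero : ¬IsPos (0 : F) := fun h => h.ne_zero rfl

end Positive

section FiniteField

variable {F : Type*} [Field F] [Fintype F]

theorem isPos_mul_of_not_isSquare {x y : F} (hx : ¬IsSquare x) (hy : ¬IsSquare y) :
    IsPos (x * y) := by
  classical
  have hxy : x * y ≠ 0 :=
    mul_ne_zero (by rintro rfl; exact hx .zero) (by rintro rfl; exact hy .zero)
  refine isPos_iff.2 ⟨(quadraticChar_one_iff_isSquare hxy).1 ?_, hxy⟩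
  rw [map_mul, quadraticChar_neg_one_iff_not_isSquare.2 hx,
    quadraticChar_neg_one_iff_not_isSquare.2 hy]
  norm_num

theorem exists_sq_add_sq (hF : ringChar F ≠ 2) (x : F) : ∃ a b : F, a ^ 2 + b ^ 2 = x := by
  classical
  obtain ⟨a, b, hab⟩ := FiniteField.exists_root_sum_quadratic
    (Polynomial.degree_X_pow 2) (Polynomial.degree_X_pow_sub_C two_pos x)
    (FiniteField.odd_card_of_char_ne_two hF)
  refine ⟨a, b, ?_⟩
  simp only [Polynomial.eval_pow, Polynomial.eval_X, Polynomial.eval_sub,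
    Polynomial.eval_C] at hab
  linear_combination hab

theorem exists_isPos_add_not_isSquare (h : IsSquare (-1 : F)) {d : F} (hd : ¬IsSquare d) :
    ∃ s : F, IsPos s ∧ ¬IsSquare (s + d) := by
  by_contra! hsq
  have hd0 : d ≠ 0 := by rintro rfl; exact hd .zero
  have add_d : ∀ s : F, IsPos s → IsPos (s + d) := fun s hs =>
    isPos_iff.2 ⟨hsq s hs, fun h0 => hd (by
      rw [eq_neg_of_add_eq_zero_right h0, isSquare_neg_iff h]; exact (isPos_iff.1 hs).1)⟩
  have add_sq_mul_d : ∀ u s : F, IsPos s → IsPos (s + u ^ 2 * d) := by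
    intro u s hs
    rcases eq_or_ne u 0 with rfl | hu
    · simpa using hs
    convert (isPos_sq hu).mul (add_d _ (hs.div (isPos_sq hu))) using 1
    field_simp
  have add_mul_d : ∀ c s : F, IsPos s → IsPos (s + c * d) := by
    intro c s hs
    obtain ⟨u, v, rfl⟩ := exists_sq_add_sq
      (fun h2 => hd (FiniteField.isSquare_of_char_two h2 d)) c
    simpa only [add_mul, add_assoc] using add_sq_mul_d v _ (add_sq_mul_d u s hs)
  have := add_mul_d (-d⁻¹) 1 isPos_one
  rw [neg_mul, inv_mul_cancel₀ hd0, add_neg_cancel] at this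
  exact not_isPos_zero this

end FiniteField

section Matrix

variable {F : Type*} [Field F]

theorem leadingMinor_last {n : ℕ} (A : Matrix (Fin (n + 1)) (Fin (n + 1)) F) :
    leadingMinor A (Fin.last n) = A.det := by
  have : Fin.castLE (Fin.last n).isLt = id := funext fun _ => rfl
  rw [leadingMinor, this, Matrix.submatrix_id_id]

theorem IsPosDef.isPos_det {n : ℕ} {A : Matrix (Fin (n + 1)) (Fin (n + 1)) F}
    (hA : IsPosDef A) : IsPos A.det :=
  leadingMinor_last A ▸ hA.2 (Fin.last n)

theorem isPosDef_fin3 {p u v r w s : F} (h₁ : IsPos p) (h₂ : IsPos (p * r - u ^ 2))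
    (h₃ : IsPos (p * r * s + 2 * u * v * w - p * w ^ 2 - r * v ^ 2 - s * u ^ 2)) :
    IsPosDef !![p, u, v; u, r, w; v, w, s] := by
  refine ⟨Matrix.IsSymm.ext fun i j => by fin_cases i <;> fin_cases j <;> rfl, fun k => ?_⟩
  fin_cases k
  · simpa [leadingMinor] using h₁
  · simpa [leadingMinor, Matrix.det_fin_two, sq] using h₂
  · change IsPos (leadingMinor _ (Fin.last 2))
    rw [leadingMinor_last, Matrix.det_fin_three]
    convert h₃ using 1
    simp only [Matrix.of_apply, Matrix.cons_val', Matrix.cons_val_zero, Matrix.cons_val_one,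
      Matrix.cons_val, Matrix.cons_val_fin_one]
    ring

end Matrix

section Preserver

variable {F : Type*} [Field F] {f : F → F} {a b : F}

theorem PreservesPos.not_forall_apply_row_eq {n : ℕ} (hf : PreservesPos (n + 1) f)
    {A : Matrix (Fin (n + 1)) (Fin (n + 1)) F} (hA : IsPosDef A) {i j : Fin (n + 1)}
    (hij : i ≠ j) : ¬∀ k, f (A i k) = f (A j k) := fun h =>
  (hf A hA).isPos_det.ne_zero (Matrix.det_zero_of_row_eq hij (funext h))

theorem PreservesPos.apply_ne_of_isPos_sub (hf : PreservesPos 3 f) (ha : IsPos a)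
    (hab : IsPos (b - a)) : f a ≠ f b := by
  intro hfab
  refine hf.not_forall_apply_row_eq (A := !![a, 0, a; 0, 1, 0; a, 0, b])
    (isPosDef_fin3 ha ?_ ?_) (i := 0) (j := 2) (by decide) ?_
  · simpa using ha
  · convert ha.mul hab using 1
    ring
  · intro k
    fin_cases k <;> simp [hfab]

theorem PreservesPos.apply_ne_of_isPos_mul (hf : PreservesPos 3 f) {s : F} (ha : IsPos a)
    (hs : IsPos s) (habs : IsPos ((b - a) * (a + s - b))) : f a ≠ f b := by
  intro hfab
  refine hf.not_forall_apply_row_eq (A := !![a, a, a; a, a + s, b; a, b, b])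
    (isPosDef_fin3 ha ?_ ?_) (i := 0) (j := 2) (by decide) ?_
  · convert ha.mul hs using 1
    ring
  · convert ha.mul habs using 1
    ring
  · intro k
    fin_cases k <;> simp [hfab]

end Preserver

/-- if `q ≡ 1 (mod 4)` and `f` preserves positivity on `M_3(F_q)`, then `f`
is injective on `F_q⁺`. -/
theorem stmt16 {F : Type*} [Field F] [Fintype F] (hq : Fintype.card F % 4 = 1)
    (f : F → F) (hpres : PreservesPos 3 f) :
    ∀ a b : F, IsPos a → IsPos b → a ≠ b → f a ≠ f b := by
  intro a b ha _ hab
  have hneg : IsSquare (-1 : F) := FiniteField.isSquare_neg_one_iff.2 (by omega)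
  by_cases hsq : IsSquare (a - b)
  · have hba : IsPos (b - a) := by
      rw [← neg_sub]
      exact (isPos_iff.2 ⟨hsq, sub_ne_zero.2 hab⟩).neg hneg
    exact hpres.apply_ne_of_isPos_sub ha hba
  · obtain ⟨s, hs, hsd⟩ := exists_isPos_add_not_isSquare hneg hsq
    have hba : ¬IsSquare (b - a) := by rwa [← neg_sub, isSquare_neg_iff hneg]
    refine hpres.apply_ne_of_isPos_mul ha hs ?_
    rw [show a + s - b = s + (a - b) by ring]
    exact isPos_mul_of_not_isSquare hba hsd
end
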